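/- Let (x̄,ȳ,z̄) solve the KKT system and let {(x^k,y^k,z^k)}_{k≥0} be an infinite sequence generated by the sPADMM. Then for every k ≥ 1: Ψ_k − Ψ_{k+1} ≥ 2‖y_e^{k+1}‖²_{Σ_f} + 2‖z_e^{k+1}‖²_{Σ_g} + ‖y^{k+1} − y^k‖_S² + ‖z^{k+1} − z^k‖_T² + (1 − τ)σ‖A*y_e^{k+1} + B*z_e^{k+1}‖² + σ‖A*y_e^{k+1} + B*z_e^{k}‖². -/

import Mathlib

open scoped RealInnerProductSpace
open Filter Bornology

noncomputable section

variable {X Y Z : Type*}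
variable [NormedAddCommGroup X] [InnerProductSpace ℝ X] [FiniteDimensional ℝ X]
variable [NormedAddCommGroup Y] [InnerProductSpace ℝ Y] [FiniteDimensional ℝ Y]
variable [NormedAddCommGroup Z] [InnerProductSpace ℝ Z] [FiniteDimensional ℝ Z]

/-- `f : E → ℝ ∪ {+∞}` is proper, convex and lower semicontinuous. -/
def ProperConvexLsc {E : Type*} [NormedAddCommGroup E] [InnerProductSpace ℝ E]
    (f : E → EReal) : Prop :=
  (∃ u, f u ≠ ⊤) ∧ (∀ u, f u ≠ ⊥) ∧
    (∀ u v : E, ∀ a b : ℝ, 0 ≤ a → 0 ≤ b → a + b = 1 →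
      f (a • u + b • v) ≤ (a : EReal) * f u + (b : EReal) * f v) ∧
    LowerSemicontinuous f

/-- `frec` is the recession function of `f`:  for any `u₀` in the effective domain of `f`,
`frec u = lim_{ρ → +∞} (f (u₀ + ρ u) - f u₀) / ρ`. -/
def IsRecessionFn {E : Type*} [NormedAddCommGroup E] [InnerProductSpace ℝ E]
    (f : E → EReal) (frec : E → EReal) : Prop :=
  ∀ u₀ : E, f u₀ ≠ ⊤ → ∀ u : E,
    Tendsto (fun ρ : ℝ => (f (u₀ + ρ • u) - f u₀) * ((ρ⁻¹ : ℝ) : EReal))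
      atTop (nhds (frec u))

/-- The augmented Lagrangian `L_σ(y, z; x)` of the problem
`min f(y) + g(z)  s.t.  A* y + B* z = c`. -/
def augL (f : Y → EReal) (g : Z → EReal) (A : X →ₗ[ℝ] Y) (B : X →ₗ[ℝ] Z)
    (c : X) (σ : ℝ) (y : Y) (z : Z) (x : X) : EReal :=
  f y + g z + ((⟪x, (LinearMap.adjoint A) y + (LinearMap.adjoint B) z - c⟫ : ℝ) : EReal)
    + ((σ / 2 * ‖(LinearMap.adjoint A) y + (LinearMap.adjoint B) z - c‖ ^ 2 : ℝ) : EReal)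

/-- Objective of the `y`-subproblem:  `F(w) = L_σ(w, z'; x') + (1/2) ‖w - y'‖_S²`. -/
def ysub (f : Y → EReal) (g : Z → EReal) (A : X →ₗ[ℝ] Y) (B : X →ₗ[ℝ] Z)
    (c : X) (σ : ℝ) (S : Y →ₗ[ℝ] Y) (x' : X) (y' : Y) (z' : Z) (w : Y) : EReal :=
  augL f g A B c σ w z' x' + ((⟪w - y', S (w - y')⟫ / 2 : ℝ) : EReal)

/-- Objective of the `z`-subproblem:  `G(w) = L_σ(y', w; x') + (1/2) ‖w - z'‖_T²`. -/
def zsub (f : Y → EReal) (g : Z → EReal) (A : X →ₗ[ℝ] Y) (B : X →ₗ[ℝ] Z)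
    (c : X) (σ : ℝ) (T : Z →ₗ[ℝ] Z) (x' : X) (y' : Y) (z' : Z) (w : Z) : EReal :=
  augL f g A B c σ y' w x' + ((⟪w - z', T (w - z')⟫ / 2 : ℝ) : EReal)

/-- The subdifferential `∂f(u)` of a function `f : E → ℝ ∪ {+∞}`. -/
def subdiff {E : Type*} [NormedAddCommGroup E] [InnerProductSpace ℝ E]
    (f : E → EReal) (u : E) : Set E :=
  {v | ∀ w : E, f u + ((⟪v, w - u⟫ : ℝ) : EReal) ≤ f w}

/-- `(x, y, z) : ℕ → X × Y × Z` is a sequence generated by the sPADMM scheme with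
penalty parameter `σ`, step-length `τ` and proximal terms given by `S` and `T`,
started from an initial point `(x⁰, y⁰, z⁰) ∈ X × dom f × dom g`. -/
def IsSPADMM (f : Y → EReal) (g : Z → EReal) (A : X →ₗ[ℝ] Y) (B : X →ₗ[ℝ] Z)
    (c : X) (σ τ : ℝ) (S : Y →ₗ[ℝ] Y) (T : Z →ₗ[ℝ] Z)
    (x : ℕ → X) (y : ℕ → Y) (z : ℕ → Z) : Prop :=
  f (y 0) ≠ ⊤ ∧ g (z 0) ≠ ⊤ ∧
    (∀ k : ℕ, ∀ w : Y,
      ysub f g A B c σ S (x k) (y k) (z k) (y (k + 1))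
        ≤ ysub f g A B c σ S (x k) (y k) (z k) w) ∧
    (∀ k : ℕ, ∀ w : Z,
      zsub f g A B c σ T (x k) (y (k + 1)) (z k) (z (k + 1))
        ≤ zsub f g A B c σ T (x k) (y (k + 1)) (z k) w) ∧
    (∀ k : ℕ, x (k + 1) = x k + (τ * σ) •
      ((LinearMap.adjoint A) (y (k + 1)) + (LinearMap.adjoint B) (z (k + 1)) - c))

/-- `(x̄, ȳ, z̄)` solves the KKT system:
`-A x̄ ∈ ∂f(ȳ)`, `-B x̄ ∈ ∂g(z̄)` and `A* ȳ + B* z̄ = c`. -/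
def IsKKT (f : Y → EReal) (g : Z → EReal) (A : X →ₗ[ℝ] Y) (B : X →ₗ[ℝ] Z)
    (c : X) (xb : X) (yb : Y) (zb : Z) : Prop :=
  -(A xb) ∈ subdiff f yb ∧ -(B xb) ∈ subdiff g zb ∧
    (LinearMap.adjoint A) yb + (LinearMap.adjoint B) zb = c

/-- Condition (C): either `0 < τ < (1+√5)/2`, or `τ ≥ (1+√5)/2` and
`Σ_k ‖x^{k+1} - x^k‖² < ∞`. -/
def CondC {X : Type*} [NormedAddCommGroup X] (τ : ℝ) (x : ℕ → X) : Prop :=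
  (0 < τ ∧ τ < (1 + Real.sqrt 5) / 2) ∨
    ((1 + Real.sqrt 5) / 2 ≤ τ ∧ Summable fun k : ℕ => ‖x (k + 1) - x k‖ ^ 2)

/-- `Sf` satisfies `⟨v - v', u - u'⟩ ≥ ‖u - u'‖²_{Sf}` for all `v ∈ ∂f(u)`, `v' ∈ ∂f(u')`. -/
def SubMono {E : Type*} [NormedAddCommGroup E] [InnerProductSpace ℝ E]
    (f : E → EReal) (Sf : E →ₗ[ℝ] E) : Prop :=
  ∀ u u' v v' : E, v ∈ subdiff f u → v' ∈ subdiff f u' →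
    ⟪u - u', Sf (u - u')⟫ ≤ ⟪v - v', u - u'⟫

/-- `Ψ_k := (1/(τσ))‖x^k - x̄‖² + ‖y^k - ȳ‖_S² + ‖z^k - z̄‖²_{T + σBB*}`. -/
def PsiSeq (B : X →ₗ[ℝ] Z) (σ τ : ℝ) (S : Y →ₗ[ℝ] Y) (T : Z →ₗ[ℝ] Z)
    (x : ℕ → X) (y : ℕ → Y) (z : ℕ → Z) (xb : X) (yb : Y) (zb : Z) (k : ℕ) : ℝ :=
  1 / (τ * σ) * ‖x k - xb‖ ^ 2 + ⟪y k - yb, S (y k - yb)⟫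
    + (⟪z k - zb, T (z k - zb)⟫ + σ * ‖(LinearMap.adjoint B) (z k - zb)‖ ^ 2)

/-- `Φ_k := Ψ_k + ‖z^k - z^{k-1}‖_T² + max(1-τ, 1-τ⁻¹) σ ‖A* y_e^k + B* z_e^k‖²`
(with the convention `z^{-1} = z⁰`, realized here by truncated subtraction `k - 1`). -/
def PhiSeq (A : X →ₗ[ℝ] Y) (B : X →ₗ[ℝ] Z) (σ τ : ℝ) (S : Y →ₗ[ℝ] Y) (T : Z →ₗ[ℝ] Z)
    (x : ℕ → X) (y : ℕ → Y) (z : ℕ → Z) (xb : X) (yb : Y) (zb : Z) (k : ℕ) : ℝ :=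
  PsiSeq B σ τ S T x y z xb yb zb k
    + ⟪z k - z (k - 1), T (z k - z (k - 1))⟫
    + max (1 - τ) (1 - τ⁻¹) * σ *
        ‖(LinearMap.adjoint A) (y k - yb) + (LinearMap.adjoint B) (z k - zb)‖ ^ 2

/-!
The optimality conditions of the two subproblems give a subgradient of `f` at `y^{k+1}` and
one of `g` at `z^{k+1}`. Since `f` and `g` take the value `+∞`, these are derived directly from
convexity along segments: the smooth part of each subproblem is quadratic, so comparing with the
point `m + t (w - m)` and letting `t → 0⁺` leaves only its gradient.

Pairing these subgradients with the KKT ones `-A x̄ ∈ ∂f(ȳ)`, `-B x̄ ∈ ∂g(z̄)` through `Σ_f`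
and `Σ_g` gives two inequalities. With `r = A* y_e^{k+1} + B* z_e^{k+1}` one has
`x_e^{k+1} = x_e^k + τσ r`, and the sum of the two inequalities becomes the claim after the
identities `2⟪S (a - b), a⟫ = ‖a‖²_S - ‖b‖²_S + ‖a - b‖²_S` and
`2⟪u + v, u⟫ + 2⟪u + w, w⟫ = ‖u + v‖² + ‖u + w‖² + ‖w‖² - ‖v‖²`.
-/

open LinearMap (adjoint)

theorem EReal.ne_top_of_add_coe_le {a b : EReal} {r s : ℝ} (h : a + r ≤ b + s) (hb : b ≠ ⊤) :
    a ≠ ⊤ := by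
  rintro rfl
  induction b using EReal.rec <;> simp_all [← EReal.coe_add]

theorem le_of_forall_le_add_mul {a c q : ℝ} (h : ∀ t : ℝ, 0 < t → t ≤ 1 → a ≤ c + t * q) :
    a ≤ c := by
  have hlim : Tendsto (fun t : ℝ => c + t * q) (nhdsWithin 0 (Set.Ioi 0)) (nhds c) :=
    tendsto_nhdsWithin_of_tendsto_nhds <|
      (by fun_prop : Continuous fun t : ℝ => c + t * q).tendsto' 0 c (by simp)
  refine ge_of_tendsto hlim ?_
  filter_upwards [Ioc_mem_nhdsGT one_pos] with t ht using h t ht.1 ht.2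

section Subdifferential

variable {E : Type*} [NormedAddCommGroup E] [InnerProductSpace ℝ E]

theorem neg_mem_subdiff_of_forall_le_add {f : E → EReal}
    (hconv : ∀ u v : E, ∀ a b : ℝ, 0 ≤ a → 0 ≤ b → a + b = 1 →
      f (a • u + b • v) ≤ (a : EReal) * f u + (b : EReal) * f v)
    (hbot : ∀ u, f u ≠ ⊥) {m : E} (hm : f m ≠ ⊤) {h : E → ℝ} {p : E} {Q : E → ℝ}
    (hh : ∀ (d : E) (t : ℝ), h (m + t • d) ≤ h m + t * ⟪p, d⟫ + t ^ 2 * Q d)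
    (hmin : ∀ w, f m + (h m : EReal) ≤ f w + (h w : EReal)) : -p ∈ subdiff f m := by
  intro w
  rcases eq_or_ne (f w) ⊤ with hw | hw
  · simp [hw]
  have hseg : ∀ t : ℝ, (1 - t) • m + t • w = m + t • (w - m) := fun t => by module
  lift f m to ℝ using ⟨hm, hbot m⟩ with a ha
  lift f w to ℝ using ⟨hw, hbot w⟩ with b hb
  have hslope : ∀ t : ℝ, 0 < t → t ≤ 1 → a ≤ b + ⟪p, w - m⟫ + t * Q (w - m) := by
    intro t ht0 ht1
    have hconv_t := hconv m w (1 - t) t (by linarith) ht0.le (by ring)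
    rw [hseg, ← ha, ← hb] at hconv_t
    have hval : (a : EReal) + (h m : EReal)
        ≤ (((1 - t) * a + t * b + h (m + t • (w - m)) : ℝ) : EReal) := by
      refine (hmin (m + t • (w - m))).trans ?_
      simp only [EReal.coe_add, EReal.coe_mul]
      gcongr
    have := hh (w - m) t
    rw [← EReal.coe_add, EReal.coe_le_coe_iff] at hval
    nlinarith
  rw [← EReal.coe_add, EReal.coe_le_coe_iff, inner_neg_left]
  linarith [le_of_forall_le_add_mul hslope]

end Subdifferential

section Optimality

variable {E W : Type*} [NormedAddCommGroup E] [InnerProductSpace ℝ E] [FiniteDimensional ℝ E]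
  [NormedAddCommGroup W] [InnerProductSpace ℝ W] [FiniteDimensional ℝ W]

/-- The finite part `w ↦ ⟪x', A* w + b⟫ + (σ/2)‖A* w + b‖² + (1/2)‖w - w₀‖²_O` of an sPADMM
subproblem objective, with the other block frozen into `b`. -/
def subproblemSmooth (A : W →ₗ[ℝ] E) (O : E →ₗ[ℝ] E) (σ : ℝ) (x' b : W) (w₀ w : E) : ℝ :=
  ⟪x', adjoint A w + b⟫ + σ / 2 * ‖adjoint A w + b‖ ^ 2 + ⟪w - w₀, O (w - w₀)⟫ / 2

theorem subproblemSmooth_add_smul (A : W →ₗ[ℝ] E) {O : E →ₗ[ℝ] E} (hO : O.IsSymmetric)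
    (σ : ℝ) (x' b : W) (w₀ m d : E) (t : ℝ) :
    subproblemSmooth A O σ x' b w₀ (m + t • d) = subproblemSmooth A O σ x' b w₀ m
      + t * ⟪A (x' + σ • (adjoint A m + b)) + O (m - w₀), d⟫
      + t ^ 2 * (σ / 2 * ‖adjoint A d‖ ^ 2 + ⟪d, O d⟫ / 2) := by
  have hres : adjoint A (m + t • d) + b = (adjoint A m + b) + t • adjoint A d := by
    rw [map_add, map_smul]; abel
  have hdev : m + t • d - w₀ = (m - w₀) + t • d := by abel
  have hOsymm : ⟪m - w₀, O d⟫ = ⟪O (m - w₀), d⟫ := (hO _ _).symm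
  have hOcomm : ⟪d, O (m - w₀)⟫ = ⟪O (m - w₀), d⟫ := real_inner_comm _ _
  unfold subproblemSmooth
  rw [hres, hdev, norm_add_sq_real, norm_smul, Real.norm_eq_abs, mul_pow, sq_abs]
  simp only [map_add, map_smul, inner_add_left, inner_add_right, inner_smul_left,
    inner_smul_right, LinearMap.adjoint_inner_right, RCLike.conj_to_real, hOsymm, hOcomm]
  ring

theorem neg_mem_subdiff_of_isMin_subproblem {f : E → EReal}
    (hconv : ∀ u v : E, ∀ a b : ℝ, 0 ≤ a → 0 ≤ b → a + b = 1 →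
      f (a • u + b • v) ≤ (a : EReal) * f u + (b : EReal) * f v)
    (hbot : ∀ u, f u ≠ ⊥) {A : W →ₗ[ℝ] E} {O : E →ₗ[ℝ] E} (hO : O.IsSymmetric)
    {σ r : ℝ} {x' b : W} {w₀ m : E} (hm : f m ≠ ⊤)
    (hmin : ∀ w, f m + ((r + subproblemSmooth A O σ x' b w₀ m : ℝ) : EReal)
      ≤ f w + ((r + subproblemSmooth A O σ x' b w₀ w : ℝ) : EReal)) :
    -(A (x' + σ • (adjoint A m + b)) + O (m - w₀)) ∈ subdiff f m :=
  neg_mem_subdiff_of_forall_le_add (h := fun w => r + subproblemSmooth A O σ x' b w₀ w)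
    (Q := fun d => σ / 2 * ‖adjoint A d‖ ^ 2 + ⟪d, O d⟫ / 2) hconv hbot hm
    (fun d t => by simp only [subproblemSmooth_add_smul A hO]; linarith) hmin

theorem SubMono.inner_le_of_mem_subdiff {f : E → EReal} {Sf : E →ₗ[ℝ] E} (hmono : SubMono f Sf)
    {A : W →ₗ[ℝ] E} {O : E →ₗ[ℝ] E} {σ : ℝ} {x xb r : W} {d m mb : E}
    (hm : -(A (x + σ • r) + O d) ∈ subdiff f m) (hmb : -(A xb) ∈ subdiff f mb) :
    ⟪m - mb, Sf (m - mb)⟫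
      ≤ -⟪x - xb, adjoint A (m - mb)⟫ - σ * ⟪r, adjoint A (m - mb)⟫ - ⟪O d, m - mb⟫ := by
  refine (hmono _ _ _ _ hm hmb).trans_eq ?_
  simp only [LinearMap.adjoint_inner_right]
  simp only [map_add, map_sub, map_smul, inner_sub_left,
    inner_neg_left, inner_add_left, inner_smul_left, RCLike.conj_to_real]
  ring

end Optimality

section Subproblems

variable {f : Y → EReal} {g : Z → EReal} {A : X →ₗ[ℝ] Y} {B : X →ₗ[ℝ] Z} {c : X} {σ : ℝ}
  {S : Y →ₗ[ℝ] Y} {T : Z →ₗ[ℝ] Z}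

theorem ysub_eq {x' : X} {y' : Y} {z' : Z} {r : ℝ} (hg : g z' = r) (w : Y) :
    ysub f g A B c σ S x' y' z' w
      = f w + ((r + subproblemSmooth A S σ x' (adjoint B z' - c) y' w : ℝ) : EReal) := by
  simp only [ysub, augL, subproblemSmooth, hg, EReal.coe_add, add_sub_assoc]
  abel

theorem zsub_eq {x' : X} {y' : Y} {z' : Z} {r : ℝ} (hf : f y' = r) (w : Z) :
    zsub f g A B c σ T x' y' z' w
      = g w + ((r + subproblemSmooth B T σ x' (adjoint A y' - c) z' w : ℝ) : EReal) := by
  have hres : adjoint A y' + adjoint B w - c = adjoint B w + (adjoint A y' - c) := by abel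
  simp only [zsub, augL, subproblemSmooth, hf, hres, EReal.coe_add]
  abel

end Subproblems

namespace IsSPADMM

variable {f : Y → EReal} {g : Z → EReal} {A : X →ₗ[ℝ] Y} {B : X →ₗ[ℝ] Z} {c : X} {σ τ : ℝ}
  {S : Y →ₗ[ℝ] Y} {T : Z →ₗ[ℝ] Z} {x : ℕ → X} {y : ℕ → Y} {z : ℕ → Z}

theorem ne_top (hseq : IsSPADMM f g A B c σ τ S T x y z) (hfbot : ∀ u, f u ≠ ⊥)
    (hgbot : ∀ u, g u ≠ ⊥) (n : ℕ) : f (y n) ≠ ⊤ ∧ g (z n) ≠ ⊤ := by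
  induction n with
  | zero => exact ⟨hseq.1, hseq.2.1⟩
  | succ n ih =>
    lift g (z n) to ℝ using ⟨ih.2, hgbot _⟩ with r hr
    have hy := hseq.2.2.1 n (y n)
    rw [ysub_eq hr.symm, ysub_eq hr.symm] at hy
    have hfy := EReal.ne_top_of_add_coe_le hy ih.1
    lift f (y (n + 1)) to ℝ using ⟨hfy, hfbot _⟩ with s hs
    have hz := hseq.2.2.2.1 n (z n)
    rw [zsub_eq hs.symm, zsub_eq hs.symm, ← hr] at hz
    exact ⟨hfy, EReal.ne_top_of_add_coe_le hz (EReal.coe_ne_top r)⟩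

theorem subdiff_y (hseq : IsSPADMM f g A B c σ τ S T x y z) (hf : ProperConvexLsc f)
    (hg : ProperConvexLsc g) (hS : S.IsSymmetric) (k : ℕ) :
    -(A (x k + σ • (adjoint A (y (k + 1)) + adjoint B (z k) - c)) + S (y (k + 1) - y k))
      ∈ subdiff f (y (k + 1)) := by
  obtain ⟨-, hfbot, hfconv, -⟩ := hf
  lift g (z k) to ℝ using ⟨(hseq.ne_top hfbot hg.2.1 k).2, hg.2.1 _⟩ with r hr
  rw [add_sub_assoc]
  exact neg_mem_subdiff_of_isMin_subproblem hfconv hfbot hS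
    (hseq.ne_top hfbot hg.2.1 (k + 1)).1
    fun w => by simpa only [ysub_eq hr.symm] using hseq.2.2.1 k w

theorem subdiff_z (hseq : IsSPADMM f g A B c σ τ S T x y z) (hf : ProperConvexLsc f)
    (hg : ProperConvexLsc g) (hT : T.IsSymmetric) (k : ℕ) :
    -(B (x k + σ • (adjoint A (y (k + 1)) + adjoint B (z (k + 1)) - c)) + T (z (k + 1) - z k))
      ∈ subdiff g (z (k + 1)) := by
  obtain ⟨-, hgbot, hgconv, -⟩ := hg
  lift f (y (k + 1)) to ℝ using ⟨(hseq.ne_top hf.2.1 hgbot (k + 1)).1, hf.2.1 _⟩ with r hr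
  rw [show adjoint A (y (k + 1)) + adjoint B (z (k + 1)) - c
      = adjoint B (z (k + 1)) + (adjoint A (y (k + 1)) - c) by abel]
  exact neg_mem_subdiff_of_isMin_subproblem hgconv hgbot hT
    (hseq.ne_top hf.2.1 hgbot (k + 1)).2
    fun w => by simpa only [zsub_eq hr.symm] using hseq.2.2.2.1 k w

end IsSPADMM

section Algebra

variable {E : Type*} [NormedAddCommGroup E] [InnerProductSpace ℝ E]

theorem two_inner_map_sub_self {O : E →ₗ[ℝ] E} (hO : O.IsSymmetric) (a b : E) :
    2 * ⟪O (a - b), a⟫ = ⟪a, O a⟫ - ⟪b, O b⟫ + ⟪a - b, O (a - b)⟫ := by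
  have hab : ⟪O b, a⟫ = ⟪b, O a⟫ := hO b a
  have hba : ⟪a, O b⟫ = ⟪b, O a⟫ := (hO a b).symm.trans (real_inner_comm _ _)
  simp only [map_sub, inner_sub_left, inner_sub_right, hO a a, hab, hba]
  ring

theorem two_inner_add_self_add_two_inner_add_self (u v w : E) :
    2 * ⟪u + v, u⟫ + 2 * ⟪u + w, w⟫ = ‖u + v‖ ^ 2 + ‖u + w‖ ^ 2 + ‖w‖ ^ 2 - ‖v‖ ^ 2 := by
  simp only [← real_inner_self_eq_norm_sq, inner_add_left, inner_add_right,
    real_inner_comm u v, real_inner_comm u w]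
  ring

end Algebra

theorem adjoint_add_adjoint_sub_eq {A : X →ₗ[ℝ] Y} {B : X →ₗ[ℝ] Z} {c : X} {yb : Y} {zb : Z}
    (hc : adjoint A yb + adjoint B zb = c) (y : Y) (z : Z) :
    adjoint A y + adjoint B z - c = adjoint A (y - yb) + adjoint B (z - zb) := by
  rw [← hc, map_sub, map_sub]
  abel

set_option linter.unusedSectionVars false in
theorem PsiSeq_sub_succ {B : X →ₗ[ℝ] Z} {σ τ : ℝ} (hτσ : τ * σ ≠ 0) (S : Y →ₗ[ℝ] Y)
    (T : Z →ₗ[ℝ] Z) {x : ℕ → X} (y : ℕ → Y) (z : ℕ → Z) {xb : X} (yb : Y) (zb : Z) {k : ℕ}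
    {r : X} (hx : x (k + 1) - xb = x k - xb + (τ * σ) • r) :
    PsiSeq B σ τ S T x y z xb yb zb k - PsiSeq B σ τ S T x y z xb yb zb (k + 1)
      = -2 * ⟪x k - xb, r⟫ - τ * σ * ‖r‖ ^ 2
        + (⟪y k - yb, S (y k - yb)⟫ - ⟪y (k + 1) - yb, S (y (k + 1) - yb)⟫)
        + (⟪z k - zb, T (z k - zb)⟫ - ⟪z (k + 1) - zb, T (z (k + 1) - zb)⟫)
        + σ * (‖adjoint B (z k - zb)‖ ^ 2 - ‖adjoint B (z (k + 1) - zb)‖ ^ 2) := by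
  rw [PsiSeq, PsiSeq, hx, norm_add_sq_real, inner_smul_right, norm_smul, Real.norm_eq_abs,
    mul_pow, sq_abs]
  obtain ⟨hτ, hσ⟩ := mul_ne_zero_iff.mp hτσ
  field_simp
  ring

theorem stmt_15_general
    (f : Y → EReal) (g : Z → EReal)
    (hf : ProperConvexLsc f) (hg : ProperConvexLsc g)
    (A : X →ₗ[ℝ] Y) (B : X →ₗ[ℝ] Z) (c : X)
    (σ τ : ℝ) (hσ : 0 < σ) (hτ : 0 < τ)
    (S : Y →ₗ[ℝ] Y) (hSsym : S.IsSymmetric)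
    (T : Z →ₗ[ℝ] Z) (hTsym : T.IsSymmetric)
    (Sf : Y →ₗ[ℝ] Y)
    (hSfmono : SubMono f Sf)
    (Sg : Z →ₗ[ℝ] Z)
    (hSgmono : SubMono g Sg)
    (xb : X) (yb : Y) (zb : Z) (hkkt : IsKKT f g A B c xb yb zb)
    (x : ℕ → X) (y : ℕ → Y) (z : ℕ → Z)
    (hseq : IsSPADMM f g A B c σ τ S T x y z) :
    ∀ k : ℕ, 1 ≤ k →
      PsiSeq B σ τ S T x y z xb yb zb k - PsiSeq B σ τ S T x y z xb yb zb (k + 1) ≥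
        2 * ⟪y (k + 1) - yb, Sf (y (k + 1) - yb)⟫
        + 2 * ⟪z (k + 1) - zb, Sg (z (k + 1) - zb)⟫
        + ⟪y (k + 1) - y k, S (y (k + 1) - y k)⟫
        + ⟪z (k + 1) - z k, T (z (k + 1) - z k)⟫
        + (1 - τ) * σ *
            ‖(LinearMap.adjoint A) (y (k + 1) - yb)
              + (LinearMap.adjoint B) (z (k + 1) - zb)‖ ^ 2
        + σ * ‖(LinearMap.adjoint A) (y (k + 1) - yb)
              + (LinearMap.adjoint B) (z k - zb)‖ ^ 2 := by
  intro k _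
  obtain ⟨hfKKT, hgKKT, hc⟩ := hkkt
  have hy := SubMono.inner_le_of_mem_subdiff hSfmono (hseq.subdiff_y hf hg hSsym k) hfKKT
  have hz := SubMono.inner_le_of_mem_subdiff hSgmono (hseq.subdiff_z hf hg hTsym k) hgKKT
  rw [adjoint_add_adjoint_sub_eq hc] at hy hz
  have hx : x (k + 1) - xb = x k - xb
      + (τ * σ) • (adjoint A (y (k + 1) - yb) + adjoint B (z (k + 1) - zb)) := by
    rw [hseq.2.2.2.2 k, adjoint_add_adjoint_sub_eq hc]
    abel
  have hSy := two_inner_map_sub_self hSsym (y (k + 1) - yb) (y k - yb)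
  have hTz := two_inner_map_sub_self hTsym (z (k + 1) - zb) (z k - zb)
  rw [sub_sub_sub_cancel_right] at hSy hTz
  have hres := two_inner_add_self_add_two_inner_add_self (adjoint A (y (k + 1) - yb))
    (adjoint B (z k - zb)) (adjoint B (z (k + 1) - zb))
  rw [ge_iff_le, PsiSeq_sub_succ (by positivity) S T y z yb zb hx, inner_add_right]
  linear_combination 2 * hy + 2 * hz - hSy - hTz - σ * hres

/-- **Proposition 2, inequality (15).**  For a KKT solution `(x̄, ȳ, z̄)` and a sequence
generated by the sPADMM, for every `k ≥ 1`:
`Ψ_k - Ψ_{k+1} ≥ 2‖y_e^{k+1}‖²_{Σ_f} + 2‖z_e^{k+1}‖²_{Σ_g} + ‖y^{k+1}-y^k‖_S²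
+ ‖z^{k+1}-z^k‖_T² + (1-τ) σ ‖A*y_e^{k+1} + B*z_e^{k+1}‖² + σ ‖A*y_e^{k+1} + B*z_e^k‖²`. -/
theorem stmt_15
    (f : Y → EReal) (g : Z → EReal)
    (hf : ProperConvexLsc f) (hg : ProperConvexLsc g)
    (A : X →ₗ[ℝ] Y) (B : X →ₗ[ℝ] Z) (c : X)
    (σ τ : ℝ) (hσ : 0 < σ) (hτ : 0 < τ)
    (S : Y →ₗ[ℝ] Y) (hSsym : S.IsSymmetric) (hSpsd : ∀ w : Y, 0 ≤ ⟪w, S w⟫)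
    (T : Z →ₗ[ℝ] Z) (hTsym : T.IsSymmetric) (hTpsd : ∀ w : Z, 0 ≤ ⟪w, T w⟫)
    (Sf : Y →ₗ[ℝ] Y) (hSfsym : Sf.IsSymmetric) (hSfpsd : ∀ w : Y, 0 ≤ ⟪w, Sf w⟫)
    (hSfmono : SubMono f Sf)
    (Sg : Z →ₗ[ℝ] Z) (hSgsym : Sg.IsSymmetric) (hSgpsd : ∀ w : Z, 0 ≤ ⟪w, Sg w⟫)
    (hSgmono : SubMono g Sg)
    (xb : X) (yb : Y) (zb : Z) (hkkt : IsKKT f g A B c xb yb zb)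
    (x : ℕ → X) (y : ℕ → Y) (z : ℕ → Z)
    (hseq : IsSPADMM f g A B c σ τ S T x y z) :
    ∀ k : ℕ, 1 ≤ k →
      PsiSeq B σ τ S T x y z xb yb zb k - PsiSeq B σ τ S T x y z xb yb zb (k + 1) ≥
        2 * ⟪y (k + 1) - yb, Sf (y (k + 1) - yb)⟫
        + 2 * ⟪z (k + 1) - zb, Sg (z (k + 1) - zb)⟫
        + ⟪y (k + 1) - y k, S (y (k + 1) - y k)⟫
        + ⟪z (k + 1) - z k, T (z (k + 1) - z k)⟫
        + (1 - τ) * σ *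
            ‖(LinearMap.adjoint A) (y (k + 1) - yb)
              + (LinearMap.adjoint B) (z (k + 1) - zb)‖ ^ 2
        + σ * ‖(LinearMap.adjoint A) (y (k + 1) - yb)
              + (LinearMap.adjoint B) (z k - zb)‖ ^ 2 :=
  stmt_15_general f g hf hg A B c σ τ hσ hτ S hSsym T hTsym Sf hSfmono Sg hSgmono xb yb zb hkkt x y
    z hseq
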